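/- arXiv:2605.16072 — 4 statements merged into one kernel-verified Lean document; each statement's English description precedes it below -/
import Mathlib

section
/- Let X_1, ..., X_n be (mutually) independent real-valued random variables on a probability space (Ω, F, P). Then E[|X_1 + ... + X_n| ∧ 1] ≤ ( Σ_{k=1}^n E[τ(X_k)²] + ( Σ_{k=1}^n E[τ(X_k)] )² )^{1/2} + Σ_{k=1}^n E[τ(X_k)²]. -/
/-!
Truncate every summand by `τ`. If all `|X_k| ≤ 1`, nothing changes, and otherwise some `τ(X_k)² = 1`,
so pointwise `|ΣX_k| ∧ 1 ≤ |Στ(X_k)| + Στ(X_k)²`. Taking expectations, Cauchy–Schwarz bounds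
`E|Στ(X_k)|` by `(E(Στ(X_k))²)^{1/2}`, and by independence
`E(Στ(X_k))² = ΣVar τ(X_k) + (ΣEτ(X_k))² ≤ ΣEτ(X_k)² + (ΣEτ(X_k))²`.
-/

open MeasureTheory ProbabilityTheory

/-- The truncation function `τ(α) = α` if `|α| ≤ 1` and `τ(α) = α/|α|` otherwise. -/
noncomputable def tau (α : ℝ) : ℝ := if |α| ≤ 1 then α else α / |α|

lemma measurable_tau : Measurable tau :=
  Measurable.ite (measurableSet_le measurable_id.abs measurable_const)
    measurable_id (measurable_id.div measurable_id.abs)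

lemma abs_tau_le_one (α : ℝ) : |tau α| ≤ 1 := by
  unfold tau
  split_ifs with h
  · exact h
  · rw [abs_div, abs_abs, div_le_one (one_pos.trans (not_le.1 h))]

lemma tau_of_abs_le_one {α : ℝ} (h : |α| ≤ 1) : tau α = α := if_pos h

lemma tau_sq_of_one_lt_abs {α : ℝ} (h : 1 < |α|) : tau α ^ 2 = 1 := by
  have hα : α ≠ 0 := abs_pos.1 (one_pos.trans h)
  rw [tau, if_neg h.not_ge, div_pow, sq_abs, div_self (pow_ne_zero 2 hα)]

lemma min_abs_sum_one_le_abs_sum_tau_add_sum_tau_sq {ι : Type*} (s : Finset ι) (x : ι → ℝ) :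
    min |∑ k ∈ s, x k| 1 ≤ |∑ k ∈ s, tau (x k)| + ∑ k ∈ s, tau (x k) ^ 2 := by
  have hsq : 0 ≤ ∑ k ∈ s, tau (x k) ^ 2 := s.sum_nonneg fun k _ => sq_nonneg _
  by_cases h : ∀ k ∈ s, |x k| ≤ 1
  · rw [s.sum_congr rfl fun k hk => tau_of_abs_le_one (h k hk)]
    exact (min_le_left _ _).trans (le_add_of_nonneg_right hsq)
  · push Not at h
    obtain ⟨k, hk, hxk⟩ := h
    have hone : 1 ≤ ∑ k ∈ s, tau (x k) ^ 2 :=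
      (tau_sq_of_one_lt_abs hxk).symm.le.trans
        (s.single_le_sum (f := fun k => tau (x k) ^ 2) (fun k _ => sq_nonneg _) hk)
    exact (min_le_right _ _).trans (hone.trans (le_add_of_nonneg_left (abs_nonneg _)))

section Integrals

variable {Ω : Type*} [MeasurableSpace Ω] {μ : Measure Ω}

lemma memLp_tau_comp [IsFiniteMeasure μ] {f : Ω → ℝ} (hf : AEMeasurable f μ)
    (p : ENNReal) : MemLp (fun ω => tau (f ω)) p μ :=
  (memLp_top_of_bound (measurable_tau.comp_aemeasurable hf).aestronglyMeasurable 1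
    (Filter.Eventually.of_forall fun ω => abs_tau_le_one (f ω))).mono_exponent le_top

lemma integral_min_abs_sum_one_le_integral_abs_sum_tau_add {ι : Type*} [Fintype ι]
    [IsFiniteMeasure μ] {X : ι → Ω → ℝ} (hX : ∀ k, AEMeasurable (X k) μ) :
    ∫ ω, min |∑ k, X k ω| 1 ∂μ
      ≤ ∫ ω, |∑ k, tau (X k ω)| ∂μ + ∑ k, ∫ ω, tau (X k ω) ^ 2 ∂μ := by
  have hT : ∀ k, MemLp (fun ω => tau (X k ω)) 2 μ := fun k => memLp_tau_comp (hX k) 2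
  have hTsq : Integrable (fun ω => ∑ k, tau (X k ω) ^ 2) μ :=
    integrable_finsetSum _ fun k _ => (hT k).integrable_sq
  have hsum : Integrable (fun ω => ∑ k, tau (X k ω)) μ :=
    integrable_finsetSum _ fun k _ => (hT k).integrable one_le_two
  have hmin : Integrable (fun ω => min |∑ k, X k ω| 1) μ := by
    refine (memLp_top_of_bound ?_ 1 (Filter.Eventually.of_forall fun ω => ?_)).integrable le_top
    · exact ((Finset.aemeasurable_fun_sum _ fun k _ => hX k).abs.min
        aemeasurable_const).aestronglyMeasurable
    · rw [Real.norm_eq_abs, abs_of_nonneg (le_min (abs_nonneg _) zero_le_one)]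
      exact min_le_right _ _
  rw [← integral_finsetSum _ fun k _ => (hT k).integrable_sq, ← integral_add hsum.abs hTsq]
  exact integral_mono hmin (hsum.abs.add hTsq)
    fun ω => min_abs_sum_one_le_abs_sum_tau_add_sum_tau_sq _ _

variable [IsProbabilityMeasure μ]

lemma integral_abs_le_sqrt_integral_sq {Y : Ω → ℝ} (hY : MemLp Y 2 μ) :
    ∫ ω, |Y ω| ∂μ ≤ Real.sqrt (∫ ω, Y ω ^ 2 ∂μ) := by
  have hvar := variance_eq_sub hY.abs ▸ variance_nonneg _ μ
  simp only [Pi.pow_apply, Pi.abs_apply, sq_abs] at hvar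
  exact Real.le_sqrt_of_sq_le (by linarith)

lemma integral_sum_sq_le_of_pairwise_indepFun {ι : Type*} [Fintype ι] {Y : ι → Ω → ℝ}
    (hY : ∀ k, MemLp (Y k) 2 μ) (hindep : Pairwise fun i j => Y i ⟂ᵢ[μ] Y j) :
    ∫ ω, (∑ k, Y k ω) ^ 2 ∂μ ≤ ∑ k, ∫ ω, Y k ω ^ 2 ∂μ + (∑ k, ∫ ω, Y k ω ∂μ) ^ 2 := by
  have hsum : MemLp (∑ k, Y k) 2 μ := memLp_finsetSum' _ fun k _ => hY k
  have hvar : variance (∑ k, Y k) μ = ∑ k, variance (Y k) μ :=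
    IndepFun.variance_sum (fun k _ => hY k) fun i _ j _ hij => hindep hij
  have hmean : ∫ ω, (∑ k, Y k) ω ∂μ = ∑ k, ∫ ω, Y k ω ∂μ := by
    simp only [Finset.sum_apply]
    exact integral_finsetSum _ fun k _ => (hY k).integrable one_le_two
  have hle : ∑ k, variance (Y k) μ ≤ ∑ k, ∫ ω, Y k ω ^ 2 ∂μ :=
    Finset.sum_le_sum fun k _ => variance_le_expectation_sq (hY k).aestronglyMeasurable
  rw [variance_eq_sub hsum, hmean] at hvar
  simp only [Pi.pow_apply, Finset.sum_apply] at hvar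
  linarith

end Integrals

/-- Lemma 3.9: for independent real random variables `X_1, …, X_n`,
`E[|Σ X_k| ∧ 1] ≤ (Σ E[τ(X_k)²] + (Σ E[τ(X_k)])²)^{1/2} + Σ E[τ(X_k)²]`. -/
theorem integral_min_abs_sum_one_le
    {Ω : Type*} [MeasurableSpace Ω] (P : Measure Ω) [IsProbabilityMeasure P]
    (n : ℕ) (X : Fin n → Ω → ℝ) (hX : ∀ k, Measurable (X k))
    (hindep : iIndepFun X P) :
    ∫ ω, min |∑ k, X k ω| 1 ∂P
      ≤ Real.sqrt ((∑ k, ∫ ω, (tau (X k ω)) ^ 2 ∂P)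
          + (∑ k, ∫ ω, tau (X k ω) ∂P) ^ 2)
        + ∑ k, ∫ ω, (tau (X k ω)) ^ 2 ∂P := by
  have hT : ∀ k, MemLp (fun ω => tau (X k ω)) 2 P := fun k => memLp_tau_comp (hX k).aemeasurable 2
  have hindepT : Pairwise fun i j => (fun ω => tau (X i ω)) ⟂ᵢ[P] fun ω => tau (X j ω) :=
    fun i j hij => (hindep.comp (fun _ => tau) fun _ => measurable_tau).indepFun hij
  calc ∫ ω, min |∑ k, X k ω| 1 ∂P
      ≤ ∫ ω, |∑ k, tau (X k ω)| ∂P + ∑ k, ∫ ω, tau (X k ω) ^ 2 ∂P :=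
        integral_min_abs_sum_one_le_integral_abs_sum_tau_add fun k => (hX k).aemeasurable
    _ ≤ Real.sqrt (∫ ω, (∑ k, tau (X k ω)) ^ 2 ∂P) + ∑ k, ∫ ω, tau (X k ω) ^ 2 ∂P := by
        gcongr
        exact integral_abs_le_sqrt_integral_sq (memLp_finsetSum _ fun k _ => hT k)
    _ ≤ _ := by
        gcongr
        exact integral_sum_sq_le_of_pairwise_indepFun hT hindepT
end

section
/- Let (R, 𝒜) be a measurable space and g : R × ℝ → ℝ a function such that r ↦ g(r,α) is 𝒜-measurable for every α ∈ ℝ and α ↦ g(r,α) is continuous for every r ∈ R. For (r,α) ∈ R × ℝ define π(r,α) = min{ β ∈ [−1,1] : g(r,αβ) = sup_{γ ∈ [−1,1]} g(r,αγ) }, which exists since the set of maximisers is a nonempty compact subset of [−1,1]. Then π : R × ℝ → [−1,1] is measurable with respect to the product σ-algebra 𝒜 ⊗ ℬ(ℝ). -/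
open Set TopologicalSpace

/-- sup over a compact interval of a continuous function equals sup over a dense sequence. -/
lemma ciSup_Icc_eq_denseSeq (f : ℝ → ℝ) (hf : Continuous f) (a b : ℝ) (hab : a ≤ b) :
    haveI : Nonempty (Icc a b) := ⟨⟨a, le_refl a, hab⟩⟩
    (⨆ β : Icc a b, f β) = ⨆ n : ℕ, f ((denseSeq (Icc a b) n : ℝ)) := by
  haveI : Nonempty (Icc a b) := ⟨⟨a, le_refl a, hab⟩⟩
  have hcomp : IsCompact (f '' Icc a b) := (isCompact_Icc.image hf)
  have hbdd : BddAbove (f '' Icc a b) := hcomp.bddAbove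
  have hrange : (Set.range fun β : Icc a b => f β) = f '' Icc a b := by
    rw [Set.image_eq_range]
  have hsub : (Set.range fun n : ℕ => f ((denseSeq (Icc a b) n : ℝ))) ⊆ f '' Icc a b := by
    rintro x ⟨n, rfl⟩
    exact ⟨_, (denseSeq (Icc a b) n).2, rfl⟩
  have hbdd2 : BddAbove (Set.range fun n : ℕ => f ((denseSeq (Icc a b) n : ℝ))) :=
    hbdd.mono hsub
  apply le_antisymm
  · refine ciSup_le fun β => ?_
    -- f β ≤ sup over seq, by density
    have hdense := denseRange_denseSeq (Icc a b)
    have hβ : (β : Icc a b) ∈ closure (Set.range (denseSeq (Icc a b))) := hdense _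
    have hcontf : Continuous fun x : Icc a b => f x := hf.comp continuous_subtype_val
    have : f β ∈ closure ((fun x : Icc a b => f x) '' Set.range (denseSeq (Icc a b))) := by
      apply (image_closure_subset_closure_image hcontf)
      exact ⟨β, hβ, rfl⟩
    have himg : ((fun x : Icc a b => f x) '' Set.range (denseSeq (Icc a b)))
        = Set.range fun n : ℕ => f ((denseSeq (Icc a b) n : ℝ)) := by
      rw [← Set.range_comp]; rfl
    rw [himg] at this
    have hsubset : closure (Set.range fun n : ℕ => f ((denseSeq (Icc a b) n : ℝ)))
        ⊆ Set.Iic (⨆ n : ℕ, f ((denseSeq (Icc a b) n : ℝ))) := by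
      apply closure_minimal _ isClosed_Iic
      rintro x ⟨n, rfl⟩
      exact le_ciSup hbdd2 n
    exact hsubset this
  · refine ciSup_le fun n => ?_
    refine le_ciSup_of_le ?_ (denseSeq (Icc a b) n) le_rfl
    rw [hrange]; exact hbdd


open Set TopologicalSpace

section helper
variable {R : Type*} [MeasurableSpace R]

/-- Joint measurability of a Carathéodory function. -/
lemma measurable_g (g : R × ℝ → ℝ)
    (hmeas : ∀ α : ℝ, Measurable fun r => g (r, α))
    (hcont : ∀ r : R, Continuous fun α => g (r, α)) : Measurable g := by
  have h := MeasureTheory.measurable_uncurry_of_continuous_of_measurable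
      (u := fun (α : ℝ) (r : R) => g (r, α)) (fun r => hcont r) (fun α => hmeas α)
  have : g = Function.uncurry (fun (α : ℝ) (r : R) => g (r, α)) ∘ Prod.swap := rfl
  rw [this]
  exact h.comp measurable_swap

lemma measurable_supIcc (g : R × ℝ → ℝ) (hg : Measurable g)
    (hcont : ∀ r : R, Continuous fun α => g (r, α)) (a b : ℝ) (hab : a ≤ b) :
    Measurable fun p : R × ℝ => ⨆ β : Icc a b, g (p.1, p.2 * β) := by
  haveI : Nonempty (Icc a b) := ⟨⟨a, le_refl a, hab⟩⟩
  have : (fun p : R × ℝ => ⨆ β : Icc a b, g (p.1, p.2 * β))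
      = fun p : R × ℝ => ⨆ n : ℕ, g (p.1, p.2 * (denseSeq (Icc a b) n : ℝ)) := by
    funext p
    exact ciSup_Icc_eq_denseSeq (fun β => g (p.1, p.2 * β))
      ((hcont p.1).comp (continuous_mul_left p.2)) a b hab
  rw [this]
  exact Measurable.iSup fun n =>
    hg.comp (measurable_fst.prodMk (measurable_snd.mul_const _))

end helper

/-- Measurable selection of the smallest maximiser: for a Carathéodory function `g`
(measurable in `r`, continuous in `α`), the function
`π(r,α) = min{β ∈ [−1,1] : g(r,αβ) = sup_{γ ∈ [−1,1]} g(r,αγ)}` is jointly measurable. -/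
theorem measurable_min_maximiser
    {R : Type*} [MeasurableSpace R] (g : R × ℝ → ℝ)
    (hmeas : ∀ α : ℝ, Measurable fun r => g (r, α))
    (hcont : ∀ r : R, Continuous fun α => g (r, α)) :
    Measurable fun p : R × ℝ =>
      sInf {β : ℝ | β ∈ Set.Icc (-1 : ℝ) 1 ∧
        g (p.1, p.2 * β) = ⨆ γ : Set.Icc (-1 : ℝ) 1, g (p.1, p.2 * γ)} := by
  have hg : Measurable g := measurable_g g hmeas hcont
  set f : R × ℝ → ℝ → ℝ := fun p β => g (p.1, p.2 * β) with hf
  have contf : ∀ p : R × ℝ, Continuous (f p) :=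
    fun p => (hcont p.1).comp (continuous_mul_left p.2)
  set M : R × ℝ → ℝ := fun p => ⨆ γ : Icc (-1 : ℝ) 1, f p γ with hM
  set S : R × ℝ → Set ℝ := fun p => {β : ℝ | β ∈ Icc (-1 : ℝ) 1 ∧ f p β = M p} with hS
  -- boundedness of ranges
  have bdd : ∀ (a b : ℝ) (p : R × ℝ), BddAbove (Set.range fun β : Icc a b => f p β) := by
    intro a b p
    rw [← Set.image_eq_range]
    exact (isCompact_Icc.image (contf p)).bddAbove
  -- attainment of sup on compact intervals
  have attain : ∀ (a b : ℝ), a ≤ b → ∀ p : R × ℝ, ∃ β0 ∈ Icc a b,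
      (⨆ β : Icc a b, f p β) = f p β0 ∧ ∀ β ∈ Icc a b, f p β ≤ f p β0 := by
    intro a b hab p
    obtain ⟨β0, hβ0, hmax⟩ := isCompact_Icc.exists_isMaxOn ⟨a, left_mem_Icc.2 hab⟩
      (contf p).continuousOn
    haveI : Nonempty (Icc a b) := ⟨⟨a, left_mem_Icc.2 hab⟩⟩
    refine ⟨β0, hβ0, le_antisymm (ciSup_le fun β => hmax β.2) ?_, fun β hβ => hmax hβ⟩
    exact le_ciSup (bdd a b p) ⟨β0, hβ0⟩
  have Smem : ∀ p : R × ℝ, sInf (S p) ∈ S p := by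
    intro p
    have hclosed : IsClosed (S p) := by
      have : S p = Icc (-1 : ℝ) 1 ∩ (f p) ⁻¹' {M p} := by
        ext β; exact Iff.rfl
      rw [this]
      exact isClosed_Icc.inter (isClosed_singleton.preimage (contf p))
    have hne : (S p).Nonempty := by
      obtain ⟨β0, hβ0, hsup, -⟩ := attain (-1) 1 (by norm_num) p
      exact ⟨β0, hβ0, hsup.symm⟩
    have hbb : BddBelow (S p) := bddBelow_Icc.mono fun β hβ => hβ.1
    exact hclosed.csInf_mem hne hbb
  apply measurable_of_Iic
  intro x
  by_cases hx : (-1 : ℝ) ≤ x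
  · -- the sublevel set is where sup over Icc (-1) (min x 1) equals M
    have hc : (-1 : ℝ) ≤ min x 1 := le_min hx (by norm_num)
    have hc1 : min x 1 ≤ 1 := min_le_right x 1
    haveI : Nonempty (Icc (-1 : ℝ) (min x 1)) := ⟨⟨-1, left_mem_Icc.2 hc⟩⟩
    have hset : (fun p : R × ℝ => sInf (S p)) ⁻¹' Iic x
        = {p : R × ℝ | (⨆ β : Icc (-1 : ℝ) (min x 1), f p β) = M p} := by
      ext p
      simp only [Set.mem_preimage, Set.mem_Iic, Set.mem_setOf_eq]
      constructor
      · intro h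
        obtain ⟨⟨hm1, hm2⟩, hmval⟩ := Smem p
        have hmem : (sInf (S p)) ∈ Icc (-1 : ℝ) (min x 1) := ⟨hm1, le_min h hm2⟩
        apply le_antisymm
        · refine ciSup_le fun β => ?_
          have : (β : ℝ) ∈ Icc (-1 : ℝ) 1 := ⟨β.2.1, β.2.2.trans hc1⟩
          exact le_ciSup_of_le (bdd (-1) 1 p) ⟨(β : ℝ), this⟩ le_rfl
        · calc M p = f p (sInf (S p)) := hmval.symm
            _ ≤ _ := le_ciSup (bdd (-1) (min x 1) p) ⟨sInf (S p), hmem⟩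
      · intro h
        obtain ⟨β0, hβ0, hsup, -⟩ := attain (-1) (min x 1) hc p
        have hβ01 : β0 ∈ Icc (-1 : ℝ) 1 := ⟨hβ0.1, hβ0.2.trans hc1⟩
        have : β0 ∈ S p := ⟨hβ01, by rw [← hsup, h]⟩
        have hle : sInf (S p) ≤ β0 :=
          csInf_le (bddBelow_Icc.mono fun β hβ => hβ.1) this
        exact hle.trans (hβ0.2.trans (min_le_left x 1))
    rw [hset]
    have h1 : Measurable fun p : R × ℝ => ⨆ β : Icc (-1 : ℝ) (min x 1), f p β :=
      measurable_supIcc g hg hcont (-1) (min x 1) hc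
    have h2 : Measurable M := measurable_supIcc g hg hcont (-1) 1 (by norm_num)
    exact measurableSet_eq_fun h1 h2
  · have hset : (fun p : R × ℝ => sInf (S p)) ⁻¹' Iic x = ∅ := by
      ext p
      simp only [Set.mem_preimage, Set.mem_Iic, Set.mem_empty_iff_false, iff_false]
      intro h
      exact hx (le_trans (Smem p).1.1 h)
    rw [hset]
    exact MeasurableSet.empty
end

section
/- Let (Ω, F, P) be a probability space, let F_0 ⊆ F_1 ⊆ ... ⊆ F_{n−1} ⊆ F be sub-σ-algebras, and let Z_0, ..., Z_{n−1} : Ω → ℝ be random variables such that Z_i is F_{i+1}-measurable for 0 ≤ i ≤ n−2. Call a family (ε_0, ..., ε_{n−1}) of random variables admissible if each ε_i : Ω → [−1,1] is F_i-measurable. Then for every c > 0, sup over admissible (ε_i) of P( max_{1 ≤ k ≤ n} | Σ_{i=0}^{k−1} ε_i Z_i | ≥ c ) ≤ sup over admissible (ε_i) of P( | Σ_{i=0}^{n−1} ε_i Z_i | ≥ c ). -/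
open MeasureTheory

/-- A family `ε_0, …, ε_{n−1}` is admissible for the filtration `ℱ` if each
`ε_i : Ω → [−1,1]` is `ℱ_i`-measurable. -/
def Admissible {Ω : Type*} (ℱ : ℕ → MeasurableSpace Ω) (n : ℕ) (ε : ℕ → Ω → ℝ) : Prop :=
  (∀ i, i ≤ n - 1 → Measurable[ℱ i] (ε i)) ∧ ∀ i ω, ε i ω ∈ Set.Icc (-1 : ℝ) 1

/-- Discrete core of Lemma 6.4 (maximal inequality for the Émery-type topology):
the supremum over admissible multiplier families of the probability that the running
maximum of the partial sums `Σ_{i<k} ε_i Z_i` exceeds `c` is bounded by the supremum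
over admissible families of the probability that the full sum exceeds `c`. -/
theorem sup_prob_running_max_le_sup_prob_sum
    {Ω : Type*} [m0 : MeasurableSpace Ω] (P : Measure Ω) [IsProbabilityMeasure P]
    (n : ℕ) (hn : 0 < n)
    (ℱ : ℕ → MeasurableSpace Ω)
    (hmono : ∀ i j, i ≤ j → j ≤ n - 1 → ℱ i ≤ ℱ j)
    (hle : ∀ i, i ≤ n - 1 → ℱ i ≤ m0)
    (Z : ℕ → Ω → ℝ)
    (hZm : ∀ i, i ≤ n - 1 → Measurable[m0] (Z i))
    (hZ : ∀ i, i + 1 ≤ n - 1 → Measurable[ℱ (i + 1)] (Z i))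
    (c : ℝ) (hc : 0 < c) :
    (⨆ ε : {ε : ℕ → Ω → ℝ // Admissible ℱ n ε},
        P {ω | c ≤ (Finset.Icc 1 n).sup' (Finset.nonempty_Icc.mpr hn)
            fun k => |∑ i ∈ Finset.range k, ε.1 i ω * Z i ω|})
      ≤ ⨆ ε : {ε : ℕ → Ω → ℝ // Admissible ℱ n ε},
          P {ω | c ≤ |∑ i ∈ Finset.range n, ε.1 i ω * Z i ω|} := by
  classical
  refine iSup_le fun ε => ?_
  obtain ⟨ε, hεm, hεb⟩ := ε
  set S : ℕ → Ω → ℝ := fun k ω => ∑ i ∈ Finset.range k, ε i ω * Z i ω with hSdef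
  set B : ℕ → Set Ω := fun i => {ω | ∀ k ∈ Finset.Icc 1 i, |S k ω| < c} with hBdef
  set ε' : ℕ → Ω → ℝ := fun i => (B i).indicator (ε i) with hε'def
  have hSmeas : ∀ i k, k ≤ i → i ≤ n - 1 → Measurable[ℱ i] (S k) := by
    intro i k hk hi
    apply Finset.measurable_sum
    intro j hj
    have hjk : j < k := Finset.mem_range.mp hj
    have h1 : Measurable[ℱ i] (ε j) :=
      (hεm j ((hjk.le.trans hk).trans hi)).mono (hmono j i (hjk.le.trans hk) hi) le_rfl
    have h2 : Measurable[ℱ i] (Z j) :=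
      (hZ j (((Nat.succ_le_of_lt hjk).trans hk).trans hi)).mono
        (hmono (j + 1) i ((Nat.succ_le_of_lt hjk).trans hk) hi) le_rfl
    exact h1.mul h2
  have hBmeas : ∀ i, i ≤ n - 1 → MeasurableSet[ℱ i] (B i) := by
    intro i hi
    have hEq : B i = ⋂ k ∈ Finset.Icc 1 i, {ω | |S k ω| < c} := by
      ext ω
      simp [hBdef, Set.mem_iInter]
    rw [hEq]
    refine MeasurableSet.iInter fun k => MeasurableSet.iInter fun hk => ?_
    have hk2 : k ≤ i := (Finset.mem_Icc.mp hk).2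
    have hEq2 : {ω | |S k ω| < c} = S k ⁻¹' Set.Ioo (-c) c := by
      ext ω
      simp only [Set.mem_setOf_eq, Set.mem_preimage, Set.mem_Ioo]
      exact abs_lt
    rw [hEq2]
    exact hSmeas i k hk2 hi measurableSet_Ioo
  have hadm : Admissible ℱ n ε' := by
    constructor
    · intro i hi
      exact Measurable.indicator (hεm i hi) (hBmeas i hi)
    · intro i ω
      by_cases h : ω ∈ B i
      · simpa [hε'def, Set.indicator_of_mem h] using hεb i ω
      · simp only [hε'def, Set.indicator_of_notMem h]
        constructor <;> norm_num
  have key : ∀ ω : Ω, (∃ k ∈ Finset.Icc 1 n, c ≤ |S k ω|) ↔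
      c ≤ |∑ i ∈ Finset.range n, ε' i ω * Z i ω| := by
    intro ω
    constructor
    · rintro ⟨k, hk, hck⟩
      obtain ⟨hk1, hkn⟩ := Finset.mem_Icc.mp hk
      have hp : ∃ m, 1 ≤ m ∧ m ≤ n ∧ c ≤ |S m ω| := ⟨k, hk1, hkn, hck⟩
      obtain ⟨h1, h2, h3⟩ := Nat.find_spec hp
      have hmin : ∀ j, 1 ≤ j → j < Nat.find hp → |S j ω| < c := by
        intro j hj1 hjk
        by_contra hcon
        push_neg at hcon
        exact Nat.find_min hp hjk ⟨hj1, hjk.le.trans h2, hcon⟩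
      have hsplit := Finset.sum_range_add_sum_Ico (fun i => ε' i ω * Z i ω) h2
      have e1 : ∑ i ∈ Finset.range (Nat.find hp), ε' i ω * Z i ω = S (Nat.find hp) ω := by
        refine Finset.sum_congr rfl fun i hi => ?_
        have hik : i < Nat.find hp := Finset.mem_range.mp hi
        have hmem : ∀ k ∈ Finset.Icc 1 i, |S k ω| < c := by
          intro k hkmem
          obtain ⟨ha, hb⟩ := Finset.mem_Icc.mp hkmem
          exact hmin k ha (lt_of_le_of_lt hb hik)
        have hmemB : ω ∈ B i := hmem
        simp only [hε'def, Set.indicator_of_mem hmemB]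
      have e2 : ∑ i ∈ Finset.Ico (Nat.find hp) n, ε' i ω * Z i ω = 0 := by
        refine Finset.sum_eq_zero fun i hi => ?_
        obtain ⟨hki, hin⟩ := Finset.mem_Ico.mp hi
        have hnot : ¬ (∀ k ∈ Finset.Icc 1 i, |S k ω| < c) := by
          push_neg
          exact ⟨Nat.find hp, Finset.mem_Icc.mpr ⟨h1, hki⟩, h3⟩
        have hnotB : ω ∉ B i := hnot
        simp only [hε'def, Set.indicator_of_notMem hnotB, zero_mul]
      have hsum : ∑ i ∈ Finset.range n, ε' i ω * Z i ω = S (Nat.find hp) ω := by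
        rw [← hsplit, e1, e2, add_zero]
      rw [hsum]
      exact h3
    · intro h
      by_contra hcon
      push_neg at hcon
      have hall : ∀ i, i < n → (∀ k ∈ Finset.Icc 1 i, |S k ω| < c) := by
        intro i hi k hkmem
        obtain ⟨ha, hb⟩ := Finset.mem_Icc.mp hkmem
        exact hcon k (Finset.mem_Icc.mpr ⟨ha, hb.trans hi.le⟩)
      have hSn : ∑ i ∈ Finset.range n, ε' i ω * Z i ω = S n ω := by
        refine Finset.sum_congr rfl fun i hi => ?_
        have hmem := hall i (Finset.mem_range.mp hi)
        have hmemB : ω ∈ B i := hmem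
        simp only [hε'def, Set.indicator_of_mem hmemB]
      rw [hSn] at h
      exact absurd h (not_le.mpr (hcon n (Finset.mem_Icc.mpr ⟨hn, le_rfl⟩)))
  refine le_trans (le_of_eq ?_)
    (le_iSup (fun ε : {ε : ℕ → Ω → ℝ // Admissible ℱ n ε} =>
      P {ω | c ≤ |∑ i ∈ Finset.range n, ε.1 i ω * Z i ω|}) ⟨ε', hadm⟩)
  congr 1
  ext ω
  simp only [Set.mem_setOf_eq, Finset.le_sup'_iff]
  exact key ω
end

section
/- Let (R, 𝒜, χ) be a measure space, let C ≥ 1, and let φ : R × [0,∞) → [0,∞) be jointly measurable such that for every r ∈ R the map α ↦ φ(r,α) is continuous, nondecreasing, satisfies φ(r,0) = 0, and satisfies φ(r,2α) ≤ C φ(r,α) for all α ≥ 0. Let f, g and f_k (k ∈ ℕ) be measurable real-valued functions on R such that f_k → f χ-almost everywhere, φ(r,|f_k(r)|) ≤ φ(r,|g(r)|) for χ-almost all r and all k, and ∫_R φ(r,|g(r)|) χ(dr) < ∞. Then ∫_R φ(r,|f_k(r) − f(r)|) χ(dr) → 0 as k → ∞. -/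
open MeasureTheory Filter Topology
open scoped NNReal ENNReal

/-! By monotonicity and the Δ₂-condition, `φ(r,|f_k - f|) ≤ C max (φ(r,|f_k|), φ(r,|f|))`, and
`φ(r,|f|) ≤ φ(r,|g|)` follows from the domination of the `f_k` by continuity of `φ(r,·)`. So
`C φ(r,|g|)` is an integrable majorant, while continuity at `0` and `φ(r,0) = 0` give
`φ(r,|f_k - f|) → 0` a.e.; Lebesgue's dominated convergence theorem concludes. -/

section DoublingFunction

variable {E : Type*} [SeminormedAddCommGroup E] {φ : ℝ≥0 → ℝ≥0}

lemma apply_nnnorm_sub_le_mul_max {C : ℝ≥0} (hmono : Monotone φ)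
    (hΔ : ∀ α, φ (2 * α) ≤ C * φ α) (x y : E) :
    φ ‖x - y‖₊ ≤ C * max (φ ‖x‖₊) (φ ‖y‖₊) := by
  have hsub : ‖x - y‖₊ ≤ 2 * max ‖x‖₊ ‖y‖₊ := by
    rw [two_mul]
    exact (nnnorm_sub_le x y).trans (add_le_add (le_max_left _ _) (le_max_right _ _))
  calc φ ‖x - y‖₊ ≤ φ (2 * max ‖x‖₊ ‖y‖₊) := hmono hsub
    _ ≤ C * φ (max ‖x‖₊ ‖y‖₊) := hΔ _
    _ = C * max (φ ‖x‖₊) (φ ‖y‖₊) := by rw [hmono.map_max]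

lemma apply_nnnorm_le_of_tendsto {ι : Type*} {l : Filter ι} [l.NeBot] (hcont : Continuous φ)
    {u : ι → E} {a : E} (hu : Tendsto u l (𝓝 a)) {b : ℝ≥0} (hb : ∀ i, φ ‖u i‖₊ ≤ b) :
    φ ‖a‖₊ ≤ b :=
  le_of_tendsto ((hcont.tendsto _).comp hu.nnnorm) (Eventually.of_forall hb)

lemma tendsto_apply_nnnorm_sub_zero {ι : Type*} {l : Filter ι} (hcont : Continuous φ)
    (h0 : φ 0 = 0) {u : ι → E} {a : E} (hu : Tendsto u l (𝓝 a)) :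
    Tendsto (fun i => φ ‖u i - a‖₊) l (𝓝 0) := by
  have hdiff : Tendsto (fun i => ‖u i - a‖₊) l (𝓝 0) := by
    simpa using (hu.sub_const a).nnnorm
  exact h0 ▸ (hcont.tendsto 0).comp hdiff

end DoublingFunction

theorem modular_dominated_convergence_general
    {R : Type*} [MeasurableSpace R] (χ : Measure R)
    (C : NNReal)
    (φ : R → NNReal → NNReal)
    (hmeas : Measurable fun p : R × NNReal => φ p.1 p.2)
    (hcont : ∀ r, Continuous (φ r))
    (hmono : ∀ r, Monotone (φ r))
    (h0 : ∀ r, φ r 0 = 0)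
    (hΔ : ∀ r α, φ r (2 * α) ≤ C * φ r α)
    (f : ℕ → R → ℝ) (F g : R → ℝ)
    (hfk : ∀ k, Measurable (f k))
    (hconv : ∀ᵐ r ∂χ, Tendsto (fun k => f k r) atTop (nhds (F r)))
    (hdom : ∀ᵐ r ∂χ, ∀ k, φ r ‖f k r‖₊ ≤ φ r ‖g r‖₊)
    (hint : ∫⁻ r, (φ r ‖g r‖₊ : ENNReal) ∂χ < ⊤) :
    Tendsto (fun k => ∫⁻ r, (φ r ‖f k r - F r‖₊ : ENNReal) ∂χ) atTop (nhds 0) := by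
  have hF : AEMeasurable F χ :=
    aemeasurable_of_tendsto_metrizable_ae' (fun k => (hfk k).aemeasurable) hconv
  have hmeas_k : ∀ k, AEMeasurable (fun r => (φ r ‖f k r - F r‖₊ : ℝ≥0∞)) χ := fun k =>
    (hmeas.comp_aemeasurable
      (aemeasurable_id.prodMk ((hfk k).aemeasurable.sub hF).nnnorm)).coe_nnreal_ennreal
  have hbound : ∀ k, ∀ᵐ r ∂χ, (φ r ‖f k r - F r‖₊ : ℝ≥0∞) ≤ C * φ r ‖g r‖₊ := fun k => by
    filter_upwards [hdom, hconv] with r hd hc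
    rw [← ENNReal.coe_mul, ENNReal.coe_le_coe]
    calc φ r ‖f k r - F r‖₊ ≤ C * max (φ r ‖f k r‖₊) (φ r ‖F r‖₊) :=
          apply_nnnorm_sub_le_mul_max (hmono r) (hΔ r) _ _
      _ ≤ C * φ r ‖g r‖₊ :=
          mul_le_mul_right (max_le (hd k) (apply_nnnorm_le_of_tendsto (hcont r) hc hd)) C
  have hbound_fin : ∫⁻ r, (C : ℝ≥0∞) * φ r ‖g r‖₊ ∂χ ≠ ⊤ := by
    rw [lintegral_const_mul' _ _ ENNReal.coe_ne_top]
    exact ENNReal.mul_ne_top ENNReal.coe_ne_top hint.ne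
  have hlim : ∀ᵐ r ∂χ, Tendsto (fun k => (φ r ‖f k r - F r‖₊ : ℝ≥0∞)) atTop (𝓝 0) :=
    hconv.mono fun r hc =>
      ENNReal.tendsto_coe.mpr (tendsto_apply_nnnorm_sub_zero (hcont r) (h0 r) hc)
  simpa using tendsto_lintegral_of_dominated_convergence' _ hmeas_k hbound hbound_fin hlim

/-- Dominated convergence for a Musielak–Orlicz modular under the Δ₂-condition:
if `φ(r,·)` is continuous, nondecreasing, vanishes at `0` and satisfies the doubling
condition `φ(r,2α) ≤ C φ(r,α)`, and if `f_k → f` χ-a.e. with the domination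
`φ(r,|f_k(r)|) ≤ φ(r,|g(r)|)` and `∫ φ(r,|g(r)|) dχ < ∞`, then
`∫ φ(r,|f_k(r) − f(r)|) dχ → 0`. -/
theorem modular_dominated_convergence
    {R : Type*} [MeasurableSpace R] (χ : Measure R)
    (C : NNReal) (hC : 1 ≤ C)
    (φ : R → NNReal → NNReal)
    (hmeas : Measurable fun p : R × NNReal => φ p.1 p.2)
    (hcont : ∀ r, Continuous (φ r))
    (hmono : ∀ r, Monotone (φ r))
    (h0 : ∀ r, φ r 0 = 0)
    (hΔ : ∀ r α, φ r (2 * α) ≤ C * φ r α)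
    (f : ℕ → R → ℝ) (F g : R → ℝ)
    (hfk : ∀ k, Measurable (f k)) (hF : Measurable F) (hg : Measurable g)
    (hconv : ∀ᵐ r ∂χ, Tendsto (fun k => f k r) atTop (nhds (F r)))
    (hdom : ∀ᵐ r ∂χ, ∀ k, φ r ‖f k r‖₊ ≤ φ r ‖g r‖₊)
    (hint : ∫⁻ r, (φ r ‖g r‖₊ : ENNReal) ∂χ < ⊤) :
    Tendsto (fun k => ∫⁻ r, (φ r ‖f k r - F r‖₊ : ENNReal) ∂χ) atTop (nhds 0) :=
  modular_dominated_convergence_general χ C φ hmeas hcont hmono h0 hΔ f F g hfk hconv hdom hint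
end
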